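/- arXiv:2402.00766 — 3 statements merged into one kernel-verified Lean document; each statement's English description precedes it below -/
import Mathlib

section
/- For a subgraph G' ⊂ G induced by V' ⊂ V, the partial stabilizer projector satisfies P(V',G) = U (|G'⟩⟨G'| ⊗ I) U, where U = ∏_{(i,j)∈Ẽ} CZ^{(i,j)} is the product of controlled-Z gates over the set Ẽ of edges connecting V' to V \ V'. -/
open scoped Classical
open Matrix

noncomputable section

namespace GraphStates

variable {V : Type} [Fintype V] [DecidableEq V]

/-- Matrices acting on the `|V|`-qubit Hilbert space `(ℂ²)^{⊗V}`,
indexed by computational basis states `V → Bool`. -/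
abbrev QMat (V : Type) := Matrix (V → Bool) (V → Bool) ℂ

/-- Pauli `Z` on qubit `i`. -/
def pauliZ (i : V) : QMat V :=
  Matrix.diagonal fun f => if f i then -1 else 1

/-- Pauli `X` on qubit `i`. -/
def pauliX (i : V) : QMat V :=
  Matrix.of fun f g => if f = Function.update g i (!g i) then 1 else 0

/-- Product of Pauli `Z` over a set `s` of qubits. -/
def zOn (s : Finset V) : QMat V :=
  Matrix.diagonal fun f => (-1 : ℂ) ^ (s.filter fun v => f v = true).card

/-- Controlled-`Z` gate on qubits `i`, `j`. -/
def czMat (i j : V) : QMat V :=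
  Matrix.diagonal fun f => if f i = true ∧ f j = true then -1 else 1

/-- The stabilizer generator `S_i = X_i ∏_{j ∈ N_i} Z_j` of the graph state of `G`. -/
def stab (G : SimpleGraph V) (i : V) : QMat V :=
  pauliX i * zOn (Finset.univ.filter fun j => G.Adj i j)

/-- The state `|+⟩^{⊗ V}`. -/
def plusVec : (V → Bool) → ℂ := fun _ => ((Real.sqrt 2 : ℂ))⁻¹ ^ Fintype.card V

/-- The product of the controlled-`Z` gates over all edges of `G`
(a single diagonal matrix, since `CZ` gates are diagonal and commute). -/
def czProd (G : SimpleGraph V) : QMat V :=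
  Matrix.diagonal fun f =>
    (-1 : ℂ) ^ ((Finset.univ : Finset (Sym2 V)).filter fun e =>
        e ∈ G.edgeSet ∧ ∀ v ∈ e, f v = true).card

/-- The graph state `|G⟩ = ∏_{(i,j) ∈ E} CZ^{(i,j)} |+⟩^{⊗n}` as a vector. -/
def graphStateVec (G : SimpleGraph V) : (V → Bool) → ℂ :=
  czProd G *ᵥ plusVec

/-- Outer product `|v⟩⟨v|`. -/
def outer {ι : Type} (v : ι → ℂ) : Matrix ι ι ℂ :=
  Matrix.of fun f g => v f * (starRingEnd ℂ) (v g)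

/-- Product of a family of matrices over a finite set (in a fixed enumeration order). -/
def prodOn (s : Finset V) (f : V → QMat V) : QMat V :=
  (s.toList.map f).prod

/-- The partial stabilizer projector `P(U,G) = ∏_{v ∈ U} (I + S_v)/2`. -/
def stabProj (G : SimpleGraph V) (s : Finset V) : QMat V :=
  prodOn s fun v => (2 : ℂ)⁻¹ • (1 + stab G v)

/-- Combine assignments on `s` and on its complement into a global assignment. -/
def merge (s : Finset V) (a : {v // v ∈ s} → Bool) (b : {v // v ∉ s} → Bool) : V → Bool :=
  fun v => if h : v ∈ s then a ⟨v, h⟩ else b ⟨v, h⟩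

/-- Partial trace onto the qubits in `s` (tracing out the complement). -/
def ptrace (s : Finset V) (ρ : QMat V) :
    Matrix ({v // v ∈ s} → Bool) ({v // v ∈ s} → Bool) ℂ :=
  Matrix.of fun a b => ∑ h : {v // v ∉ s} → Bool, ρ (merge s a h) (merge s b h)

/-- Embed an operator on the qubits in `s` into the full system, tensoring with
the identity on the remaining qubits: `A ↦ A ⊗ I`. -/
def embedOp (s : Finset V)
    (A : Matrix ({v // v ∈ s} → Bool) ({v // v ∈ s} → Bool) ℂ) : QMat V :=
  Matrix.of fun f g =>
    if ∀ v, v ∉ s → f v = g v then A (fun v => f v.1) (fun v => g v.1) else 0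

/-- The subgraph of `G` induced by the vertex subset `s`. -/
def inducedGraph (G : SimpleGraph V) (s : Finset V) : SimpleGraph {v // v ∈ s} :=
  G.comap Subtype.val

/-- The subgraph of `G` induced by the complement of `s`. -/
def inducedGraphC (G : SimpleGraph V) (s : Finset V) : SimpleGraph {v // v ∉ s} :=
  G.comap Subtype.val

/-- The product `U = ∏_{(i,j) ∈ Ẽ} CZ^{(i,j)}` of controlled-`Z` gates over the set `Ẽ`
of edges of `G` having exactly one endpoint in `s`. -/
def czCut (G : SimpleGraph V) (s : Finset V) : QMat V :=
  Matrix.diagonal fun f =>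
    (-1 : ℂ) ^ ((Finset.univ : Finset (Sym2 V)).filter fun e =>
        e ∈ G.edgeSet ∧ (∀ v ∈ e, f v = true) ∧ (∃ v ∈ e, v ∈ s) ∧ (∃ v ∈ e, v ∉ s)).card

/-- Tensor product of an operator on the qubits in `s` with an operator on the
complementary qubits, as an operator on the full system. -/
def tensorSplit (s : Finset V)
    (A : Matrix ({v // v ∈ s} → Bool) ({v // v ∈ s} → Bool) ℂ)
    (B : Matrix ({v // v ∉ s} → Bool) ({v // v ∉ s} → Bool) ℂ) : QMat V :=
  Matrix.of fun f g =>
    A (fun v => f v.1) (fun v => g v.1) * B (fun v => f v.1) (fun v => g v.1)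

/-- `ρ` is a pure state: the outer product of a normalized vector. -/
def IsPure {ι : Type} [Fintype ι] (ρ : Matrix ι ι ℂ) : Prop :=
  ∃ v : ι → ℂ, (∑ x, Complex.normSq (v x)) = 1 ∧ ρ = outer v

/-- `ρ` is separable with respect to the bipartition `(s, sᶜ)` of the qubits:
a probabilistic mixture of tensor products of pure states of the two subsystems. -/
def SeparableWrt (s : Finset V) (ρ : QMat V) : Prop :=
  ∃ (ι : Type) (_ : Fintype ι) (p : ι → ℝ)
    (a : ι → Matrix ({v // v ∈ s} → Bool) ({v // v ∈ s} → Bool) ℂ)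
    (b : ι → Matrix ({v // v ∉ s} → Bool) ({v // v ∉ s} → Bool) ℂ),
    (∀ k, 0 ≤ p k) ∧ (∑ k, p k) = 1 ∧
    (∀ k, IsPure (a k) ∧ IsPure (b k)) ∧
    ρ = ∑ k, (p k : ℂ) • tensorSplit s (a k) (b k)

/-- `ρ` is biseparable: a convex mixture of states, each separable with respect to
some (nontrivial) bipartition of the qubits. -/
def Biseparable (ρ : QMat V) : Prop :=
  ∃ (ι : Type) (_ : Fintype ι) (q : ι → ℝ) (A : ι → Finset V) (σ : ι → QMat V),
    (∀ k, 0 ≤ q k) ∧ (∑ k, q k) = 1 ∧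
    (∀ k, (A k).Nonempty ∧ A k ≠ Finset.univ ∧ SeparableWrt (A k) (σ k)) ∧
    ρ = ∑ k, (q k : ℂ) • σ k

/-- `𝒱` is a partition of the vertex subset `t` into nonempty pairwise disjoint blocks. -/
def IsPartitionOn (t : Finset V) (𝒱 : Finset (Finset V)) : Prop :=
  (∀ B ∈ 𝒱, B.Nonempty) ∧
  ((𝒱 : Set (Finset V)).Pairwise fun B C => Disjoint B C) ∧
  𝒱.sup id = t

/-- The entanglement witness `W(𝒱,G) = (k − 1/2) I − ∑_{B ∈ 𝒱} P(B,G)`. -/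
def witnessW (G : SimpleGraph V) (𝒱 : Finset (Finset V)) : QMat V :=
  ((𝒱.card : ℂ) - 1/2) • 1 - ∑ B ∈ 𝒱, stabProj G B

/-- The white-noise-mixed state `ρ(p) = (1−p) ρ₀ + p I / 2^n`. -/
def whiteNoise (ρ0 : QMat V) (p : ℝ) : QMat V :=
  ((1 - p : ℝ) : ℂ) • ρ0 + ((p : ℂ) / (2 ^ Fintype.card V)) • 1

/-- The element `∏_i S_i^{x_i}` of the stabilizer group of `|G⟩`. -/
def stabElem (G : SimpleGraph V) (x : V → Bool) : QMat V :=
  prodOn (Finset.univ.filter fun i => x i = true) (stab G)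

/-- The stabilizer generator of the induced subgraph `G' = G[s]`, extended by
identity to the full system: `S_i' = X_i ∏_{j ∈ N_i ∩ s} Z_j`. -/
def subStab (G : SimpleGraph V) (s : Finset V) (i : V) : QMat V :=
  pauliX i * zOn ((Finset.univ.filter fun j => G.Adj i j) ∩ s)


/-! The stabilizer generators are conjugates of Pauli `X` by the diagonal involution
`D = ∏_{e ∈ E} CZ_e`: `S_v = D X_v D`. Hence `P(V',G) = D (∏_{v ∈ V'} (I + X_v)/2) D`, and the middle
factor is `|+⟩⟨+|^{⊗V'} ⊗ I`. Split `D` into the `CZ`s inside `V'`, across the cut, and inside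
`V ∖ V'`: the first part turns `|+⟩^{⊗V'}` into `|G'⟩`, the second is `U`, and the third is a sign
that only depends on the qubits outside `V'`, on which the projector is the identity, so its
two occurrences cancel. -/

open Finset

/-- The eigenvalue of `∏_{e ∈ E} CZ_e` on the basis state `f`. -/
def czSign {W : Type} [Fintype W] (E : Set (Sym2 W)) (f : W → Bool) : ℂ :=
  (-1) ^ #{e | e ∈ E ∧ ∀ v ∈ e, f v = true}

section czSign

variable {W : Type} [Fintype W] (E : Set (Sym2 W))

lemma czSign_mul_self (f : W → Bool) : czSign E f * czSign E f = 1 := by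
  rw [czSign, ← mul_pow, neg_one_mul, neg_neg, one_pow]

lemma czSign_union (F : Set (Sym2 W)) (f : W → Bool) (h : Disjoint E F) : czSign (E ∪ F) f = czSign E f * czSign F f := by
  rw [czSign, czSign, czSign, ← pow_add, ← card_union_of_disjoint]
  · congr 2
    ext e
    simp [or_and_right]
  · rw [disjoint_filter]
    exact fun e _ he hf => h.ne_of_mem he.1 hf.1 rfl

lemma czSign_congr {f g : W → Bool} (h : ∀ e ∈ E, ∀ v ∈ e, f v = g v) :
    czSign E f = czSign E g := by
  unfold czSign
  congr 2
  ext e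
  simp only [mem_filter, mem_univ, true_and, and_congr_right_iff]
  exact fun he => forall₂_congr fun v hv => by rw [h e he v hv]

lemma czSign_eq_inside_mul_outside_mul_cut (f : W → Bool) (A : Set W) :
    czSign E f =
      czSign (E ∩ A.sym2) f * czSign (E ∩ Aᶜ.sym2) f * czSign (E \ (A.sym2 ∪ Aᶜ.sym2)) f := by
  have inside_disjoint_outside : Disjoint (E ∩ A.sym2) (E ∩ Aᶜ.sym2) := by
    rw [Set.disjoint_iff_inter_eq_empty, Set.inter_inter_inter_comm, ← Set.sym2_inter,
      Set.inter_compl_self, Set.sym2_empty, Set.inter_empty]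
  rw [← czSign_union _ _ _ inside_disjoint_outside, ← Set.inter_union_distrib_left,
    ← czSign_union _ _ _ Set.disjoint_sdiff_inter.symm, Set.inter_union_sdiff]

lemma czSign_mul_of_eqOn_compl (A : Set W) {f g : W → Bool} (hfg : ∀ v ∉ A, f v = g v) :
    czSign E f * czSign E g =
      czSign (E ∩ A.sym2) f * czSign (E \ (A.sym2 ∪ Aᶜ.sym2)) f *
        (czSign (E ∩ A.sym2) g * czSign (E \ (A.sym2 ∪ Aᶜ.sym2)) g) := by
  have outside_eq : czSign (E ∩ Aᶜ.sym2) f = czSign (E ∩ Aᶜ.sym2) g :=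
    czSign_congr _ fun e he v hv => hfg v (Set.mem_sym2_iff_subset.1 he.2 hv)
  rw [czSign_eq_inside_mul_outside_mul_cut _ f A, czSign_eq_inside_mul_outside_mul_cut _ g A,
    outside_eq, mul_right_comm (czSign _ f), mul_right_comm (czSign _ g), mul_mul_mul_comm,
    czSign_mul_self, mul_one]

end czSign

lemma _root_.Set.range_sym2Map {α β : Type*} (f : α → β) :
    Set.range (Sym2.map f) = (Set.range f).sym2 := by
  rw [← Set.image_univ, ← Set.image_univ, ← Set.sym2_univ, Set.sym2_image]

lemma czSign_comap_edgeSet {U W : Type} [Fintype U] [Fintype W] (G : SimpleGraph U)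
    (φ : W ↪ U) (f : U → Bool) :
    czSign (G.comap φ).edgeSet (f ∘ φ) = czSign (G.edgeSet ∩ (Set.range φ).sym2) f := by
  unfold czSign
  rw [← Set.range_sym2Map, ← card_map φ.sym2Map]
  congr 2
  ext e
  simp only [mem_map, mem_filter, mem_univ, true_and]
  constructor
  · rintro ⟨a, ⟨ha, hon⟩, rfl⟩
    refine ⟨⟨?_, a, rfl⟩, ?_⟩
    · induction a using Sym2.ind with | _ x y => simpa using ha
    · simpa [Sym2.mem_map] using hon
  · rintro ⟨⟨he, a, rfl⟩, hon⟩
    refine ⟨a, ⟨?_, fun v hv => hon _ (Sym2.mem_map.2 ⟨v, hv, rfl⟩)⟩, rfl⟩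
    induction a using Sym2.ind with | _ x y => simpa using he

section Switching

variable {W : Type} [Fintype W] [DecidableEq W] (G : SimpleGraph W) (g : W → Bool) (v : W)

lemma card_edges_on_update_true :
    #{e | e ∈ G.edgeSet ∧ ∀ u ∈ e, Function.update g v true u = true} =
      #{e | e ∈ G.edgeSet ∧ ∀ u ∈ e, Function.update g v false u = true} +
        #{j | G.Adj v j ∧ g j = true} := by
  rw [← card_image_of_injective _ (Sym2.mkEmbedding v).injective, ← card_union_of_disjoint]
  · congr 1
    ext e
    induction e using Sym2.ind with
    | _ x y =>
      simp only [mem_filter, mem_univ, true_and, mem_union, mem_image, SimpleGraph.mem_edgeSet,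
        Sym2.forall_mem_pair, Sym2.mkEmbedding_apply, Sym2.eq_iff]
      by_cases hx : x = v <;> by_cases hy : y = v <;> subst_vars <;>
        grind [SimpleGraph.Adj.symm, SimpleGraph.Adj.ne, Function.update_self,
          Function.update_of_ne]
  · rw [disjoint_left]
    intro e he he'
    obtain ⟨j, -, rfl⟩ := mem_image.1 he'
    simp at he

lemma czSign_edgeSet_update_not :
    czSign G.edgeSet (Function.update g v (!g v)) =
      (-1) ^ #{j | G.Adj v j ∧ g j = true} * czSign G.edgeSet g := by
  have switch_on : czSign G.edgeSet (Function.update g v true) =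
      (-1) ^ #{j | G.Adj v j ∧ g j = true} * czSign G.edgeSet (Function.update g v false) := by
    rw [czSign, czSign, ← pow_add, add_comm]
    -- the two sides differ only in the `Decidable` instances of the filters
    convert congrArg ((-1 : ℂ) ^ ·) (card_edges_on_update_true G g v) using 3 <;> congr
  cases h : g v
  · have hg : Function.update g v false = g := h ▸ Function.update_eq_self v g
    rw [Bool.not_false, switch_on, hg]
  · have hg : Function.update g v true = g := h ▸ Function.update_eq_self v g
    rw [hg] at switch_on
    rw [Bool.not_true, switch_on, ← mul_assoc, ← mul_pow, neg_one_mul, neg_neg, one_pow, one_mul]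

end Switching

lemma _root_.List.prod_map_conj_of_mul_self {M α : Type*} [Monoid M] {d : M} (hd : d * d = 1)
    (f : α → M) (L : List α) : (L.map fun a => d * f a * d).prod = d * (L.map f).prod * d := by
  induction L with
  | nil => simp [hd]
  | cons a L ih =>
    rw [List.map_cons, List.prod_cons, ih, List.map_cons, List.prod_cons]
    calc d * f a * d * (d * (L.map f).prod * d)
        = d * f a * (d * d) * (L.map f).prod * d := by simp only [mul_assoc]
      _ = d * (f a * (L.map f).prod) * d := by rw [hd, mul_one, mul_assoc d]

lemma czProd_eq_diagonal_czSign (G : SimpleGraph V) : czProd G = diagonal (czSign G.edgeSet) := by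
  unfold czProd czSign
  congr! with f

lemma czProd_mul_self (G : SimpleGraph V) : czProd G * czProd G = 1 := by
  rw [czProd_eq_diagonal_czSign, diagonal_mul_diagonal, ← diagonal_one]
  exact congrArg diagonal (funext fun f => czSign_mul_self _ f)

lemma stab_eq_czProd_mul_pauliX_mul_czProd (G : SimpleGraph V) (v : V) :
    stab G v = czProd G * pauliX v * czProd G := by
  ext f g
  rw [czProd_eq_diagonal_czSign, mul_diagonal, diagonal_mul, stab, zOn, mul_diagonal, pauliX,
    of_apply, filter_filter]
  split_ifs with hfg
  · rw [hfg, czSign_edgeSet_update_not, mul_one, mul_assoc, czSign_mul_self, mul_one, one_mul]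
  · simp

lemma pauliX_mul_apply (v : V) (B : QMat V) (f g : V → Bool) :
    (pauliX v * B) f g = B (Function.update f v (!f v)) g := by
  rw [mul_apply, Fintype.sum_eq_single (Function.update f v (!f v))]
  · simp [pauliX]
  · intro h hh
    rw [pauliX, of_apply, if_neg, zero_mul]
    rintro rfl
    exact hh (by simp)

lemma prod_map_half_one_add_pauliX {L : List V} (hL : L.Nodup) :
    (L.map fun v => (2 : ℂ)⁻¹ • (1 + pauliX v)).prod =
      of fun f g => if ∀ v ∉ L, f v = g v then (2 : ℂ)⁻¹ ^ L.length else 0 := by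
  induction L with
  | nil => ext f g; simp [one_apply, funext_iff]
  | cons a L ih =>
    obtain ⟨haL, hL⟩ := List.nodup_cons.1 hL
    ext f g
    have agree_off_L (h : V → Bool) :
        (∀ v ∉ L, h v = g v) ↔ h a = g a ∧ ∀ v ∉ a :: L, h v = g v := by
      grind
    have agree_flip : (∀ v ∉ a :: L, Function.update f a (!f a) v = g v) ↔
        ∀ v ∉ a :: L, f v = g v :=
      forall₂_congr fun v hv => by rw [Function.update_of_ne (List.ne_of_not_mem_cons hv)]
    rw [List.map_cons, List.prod_cons, ih hL, smul_mul, add_mul, one_mul, Matrix.smul_apply,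
      Matrix.add_apply, pauliX_mul_apply]
    simp only [of_apply, agree_off_L, agree_flip, Function.update_self, List.length_cons,
      pow_succ, smul_eq_mul]
    cases f a <;> cases g a <;> simp [mul_comm]

lemma czCut_eq_diagonal_czSign (G : SimpleGraph V) (s : Finset V) :
    czCut G s = diagonal (czSign (G.edgeSet \ ((s : Set V).sym2 ∪ (sᶜ : Set V).sym2))) := by
  unfold czCut czSign
  congr! 4 with f
  ext e
  induction e using Sym2.ind with
  | _ x y => simp; tauto

lemma graphStateVec_inducedGraph_apply (G : SimpleGraph V) (s : Finset V) (f : V → Bool) :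
    graphStateVec (inducedGraph G s) (fun v => f v) =
      czSign (G.edgeSet ∩ (s : Set V).sym2) f * ((Real.sqrt 2 : ℂ))⁻¹ ^ #s := by
  rw [graphStateVec, czProd_eq_diagonal_czSign, mulVec_diagonal, plusVec, Fintype.card_coe]
  congr 1
  exact (czSign_comap_edgeSet G (Function.Embedding.subtype (· ∈ s)) f).trans (by simp)

lemma conj_graphStateVec {W : Type} [Fintype W] [DecidableEq W] (G : SimpleGraph W)
    (a : W → Bool) : starRingEnd ℂ (graphStateVec G a) = graphStateVec G a := by
  simp [graphStateVec, czProd, plusVec, mulVec_diagonal]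

lemma inv_sqrt_two_pow_mul_self (n : ℕ) :
    ((Real.sqrt 2 : ℂ))⁻¹ ^ n * ((Real.sqrt 2 : ℂ))⁻¹ ^ n = (2 : ℂ)⁻¹ ^ n := by
  rw [← mul_pow, ← mul_inv, ← Complex.ofReal_mul, Real.mul_self_sqrt zero_le_two]
  norm_num

/-- `P(V',G) = U (|G'⟩⟨G'| ⊗ I) U` where `U` is the product of the
controlled-`Z` gates over the edges connecting `V'` with `V \ V'`. -/
theorem stabProj_eq_cz_conj_subgraph_projector (G : SimpleGraph V) (s : Finset V) :
    stabProj G s =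
      czCut G s * embedOp s (outer (graphStateVec (inducedGraph G s))) * czCut G s := by
  have factor_eq_conj : (fun v => (2 : ℂ)⁻¹ • (1 + stab G v)) =
      fun v => czProd G * ((2 : ℂ)⁻¹ • (1 + pauliX v)) * czProd G := by
    funext v
    rw [stab_eq_czProd_mul_pauliX_mul_czProd, mul_smul_comm, smul_mul_assoc, mul_add, add_mul,
      mul_one, czProd_mul_self]
  rw [stabProj, prodOn, factor_eq_conj, List.prod_map_conj_of_mul_self (czProd_mul_self G),
    prod_map_half_one_add_pauliX s.nodup_toList]
  ext f g
  rw [czProd_eq_diagonal_czSign, czCut_eq_diagonal_czSign, mul_diagonal, diagonal_mul,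
    mul_diagonal, diagonal_mul, embedOp, of_apply, of_apply]
  simp only [Finset.mem_toList, Finset.length_toList]
  split_ifs with hfg
  · rw [outer, of_apply, conj_graphStateVec, graphStateVec_inducedGraph_apply,
      graphStateVec_inducedGraph_apply, ← inv_sqrt_two_pow_mul_self]
    linear_combination ((Real.sqrt 2 : ℂ)⁻¹ ^ #s * (Real.sqrt 2 : ℂ)⁻¹ ^ #s) *
      czSign_mul_of_eqOn_compl G.edgeSet (s : Set V) hfg
  · simp

end GraphStates
end
end

section
/- Refinement monotonicity of graph-state witnesses: if the partition Ṽ = {Ṽ_1,…,Ṽ_l} of V refines the partition 𝒱 = {V_1,…,V_k}, then W(Ṽ,G) − W(𝒱,G) is positive semidefinite, where W(𝒱,G) = (k − 1/2)I − ∑_{m=1}^k P(V_m,G). -/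
open scoped Classical ComplexOrder
open Matrix

noncomputable section

namespace GraphStates

variable {V : Type} [Fintype V] [DecidableEq V]

/-! The projectors `P(U,G)` are products of the commuting projectors `(1 + S_v)/2`, so they
commute with each other and `P(U ∪ U') = P(U) P(U')` for disjoint `U, U'`. For commuting
projectors `p, q` the operator `1 + pq - p - q = (1 - p)(1 - q)` is again a projector, hence
`p + q ≤ 1 + pq`, and by induction `∑ᵢ pᵢ + 1 ≤ n + ∏ᵢ pᵢ` for `n` commuting projectors.
Applied to the blocks of `𝒲` contained in a block `C` of `𝒱`, whose union is `C`, this reads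
`∑_{B ⊆ C} P(B) + 1 ≤ #{B ⊆ C} + P(C)`; summing over `C ∈ 𝒱` gives
`W(𝒱,G) ≤ W(𝒲,G)`. -/

open scoped MatrixOrder Function
open Finset

section StarProjection

variable {R : Type*}

theorem _root_.IsStarProjection.noncommProd {ι : Type*} [Semiring R] [StarRing R]
    (s : Finset ι) (f : ι → R) (comm : (s : Set ι).Pairwise (Commute on f))
    (hf : ∀ i ∈ s, IsStarProjection (f i)) : IsStarProjection (s.noncommProd f comm) := by
  induction s using Finset.cons_induction with
  | empty => simp [IsStarProjection.one]
  | cons a s ha ih =>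
    rw [noncommProd_cons _ _ _ ha]
    refine (hf a (mem_cons_self a s)).mul (ih _ fun i hi => hf i (mem_cons_of_mem hi)) ?_
    exact noncommProd_commute _ _ _ _ fun i hi =>
      comm (mem_cons_self a s) (mem_cons_of_mem hi) (ne_of_mem_of_not_mem hi ha).symm

theorem _root_.IsStarProjection.inv_two_smul_one_add {𝕜 : Type*} [RCLike 𝕜] [Ring R]
    [StarRing R] [Algebra 𝕜 R] [StarModule 𝕜 R] {s : R} (hs : IsSelfAdjoint s)
    (hss : s * s = 1) : IsStarProjection ((2 : 𝕜)⁻¹ • (1 + s)) where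
  isIdempotentElem := by
    rw [IsIdempotentElem, smul_mul_smul_comm, show (1 + s) * (1 + s) = (2 : 𝕜) • (1 + s) by
      rw [two_smul, add_mul, one_mul, mul_add, mul_one, hss]; abel, smul_smul]
    norm_num
  isSelfAdjoint := by
    rw [IsSelfAdjoint, star_smul, star_add, star_one, hs.star_eq]
    norm_num

variable [Ring R] [PartialOrder R] [StarRing R] [StarOrderedRing R]

theorem _root_.IsStarProjection.add_le_one_add_mul {p q : R} (hp : IsStarProjection p)
    (hq : IsStarProjection q) (hpq : Commute p q) : p + q ≤ 1 + p * q := by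
  have h := (hp.one_sub.mul hq.one_sub
    ((Commute.one_right _).sub_right ((Commute.one_left q).sub_left hpq))).nonneg
  rw [show (1 - p) * (1 - q) = 1 + p * q - (p + q) by noncomm_ring] at h
  exact sub_nonneg.1 h

theorem _root_.Finset.sum_add_one_le_card_add_noncommProd {ι : Type*} (s : Finset ι)
    (f : ι → R) (comm : (s : Set ι).Pairwise (Commute on f))
    (hf : ∀ i ∈ s, IsStarProjection (f i)) :
    ∑ i ∈ s, f i + 1 ≤ #s + s.noncommProd f comm := by
  induction s using Finset.cons_induction with
  | empty => simp
  | cons a s ha ih =>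
    have hs : ∀ i ∈ s, IsStarProjection (f i) := fun i hi => hf i (mem_cons_of_mem hi)
    have comm' : (s : Set ι).Pairwise (Commute on f) :=
      comm.mono (coe_subset.2 (subset_cons ha))
    have hcomm : Commute (f a) (s.noncommProd f comm') := noncommProd_commute _ _ _ _ fun i hi =>
      comm (mem_cons_self a s) (mem_cons_of_mem hi) (ne_of_mem_of_not_mem hi ha).symm
    have hpair := (hf a (mem_cons_self a s)).add_le_one_add_mul
      (IsStarProjection.noncommProd s f comm' hs) hcomm
    rw [sum_cons, card_cons, noncommProd_cons _ _ _ ha]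
    calc f a + ∑ i ∈ s, f i + 1 ≤ f a + (#s + s.noncommProd f comm') := by
          rw [add_assoc]; exact add_le_add_right (ih comm' hs) _
      _ = #s + (f a + s.noncommProd f comm') := by abel
      _ ≤ #s + (1 + f a * s.noncommProd f comm') := add_le_add_right hpair _
      _ = ↑(#s + 1) + f a * s.noncommProd f comm' := by push_cast; abel

end StarProjection

theorem _root_.Finset.sup_filter_eq_of_refines {α : Type*} [DecidableEq α]
    {𝒱 𝒲 : Finset (Finset α)} {parent : Finset α → Finset α} {C : Finset α}
    (h𝒱 : (𝒱 : Set (Finset α)).PairwiseDisjoint id) (hcover : C ⊆ 𝒲.sup id)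
    (hparent : ∀ B ∈ 𝒲, parent B ∈ 𝒱) (hsub : ∀ B ∈ 𝒲, B ⊆ parent B)
    (hC : C ∈ 𝒱) :
    {B ∈ 𝒲 | parent B = C}.sup id = C := by
  refine le_antisymm (Finset.sup_le fun B hB => ?_) fun v hv => ?_
  · obtain ⟨hB𝒲, rfl⟩ := mem_filter.1 hB
    exact hsub B hB𝒲
  · obtain ⟨B, hB, hvB⟩ := mem_sup.1 (hcover hv)
    have hBC : parent B = C := h𝒱.elim_finset (hparent B hB) hC v (hsub B hB hvB) hv
    exact mem_sup.2 ⟨B, mem_filter.2 ⟨hB, hBC⟩, hvB⟩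

section FlipAt

variable {α : Type*} [DecidableEq α]

def flipAt (i : α) : Equiv.Perm (α → Bool) :=
  Function.Involutive.toPerm (fun g => Function.update g i (!g i)) fun g => by simp

@[simp]
lemma flipAt_apply (i : α) (g : α → Bool) : flipAt i g = Function.update g i (!g i) := rfl

@[simp]
lemma flipAt_flipAt (i : α) (g : α → Bool) : flipAt i (flipAt i g) = g := by simp

lemma flipAt_mul_self (i : α) : flipAt i * flipAt i = 1 := by
  ext g : 1
  simp

lemma flipAt_commute (i j : α) : Commute (flipAt i) (flipAt j) := by
  rcases eq_or_ne i j with rfl | hij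
  · rfl
  ext g : 1
  simp [Function.update_comm hij, Function.update_of_ne hij, Function.update_of_ne hij.symm]

lemma neg_one_pow_card_filter_flipAt {R : Type*} [Ring R] (s : Finset α) (i : α)
    (g : α → Bool) :
    (-1 : R) ^ #{v ∈ s | flipAt i g v = true} =
      (if i ∈ s then -1 else 1) * (-1) ^ #{v ∈ s | g v = true} := by
  have hoff (t : Finset α) (hit : i ∉ t) :
      {v ∈ t | flipAt i g v = true} = {v ∈ t | g v = true} :=
    filter_congr fun v hv => by
      rw [flipAt_apply, Function.update_of_ne (ne_of_mem_of_not_mem hv hit)]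
  split_ifs with hi
  · rw [← insert_erase hi, filter_insert, filter_insert, hoff _ (notMem_erase i s)]
    have hnot : i ∉ {v ∈ s.erase i | g v = true} := fun h => notMem_erase i s (mem_filter.1 h).1
    cases hgi : g i <;> simp [hgi, card_insert_of_notMem hnot, pow_succ]
  · rw [one_mul, hoff s hi]

end FlipAt

lemma pauliX_eq_permMatrix (i : V) : pauliX i = (flipAt i).permMatrix ℂ := by
  ext f g
  have h : f = flipAt i g ↔ flipAt i f = g := by
    constructor <;> rintro rfl <;> simp only [flipAt_flipAt]
  simp only [flipAt_apply] at h
  simp [pauliX, h]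

lemma conjTranspose_pauliX (i : V) : (pauliX i)ᴴ = pauliX i := by
  rw [pauliX_eq_permMatrix, conjTranspose_permMatrix,
    inv_eq_of_mul_eq_one_left (flipAt_mul_self i)]

lemma pauliX_mul_self (i : V) : pauliX i * pauliX i = 1 := by
  rw [pauliX_eq_permMatrix, ← permMatrix_mul, flipAt_mul_self, permMatrix_one]

lemma commute_pauliX (i j : V) : Commute (pauliX i) (pauliX j) := by
  rw [Commute, SemiconjBy, pauliX_eq_permMatrix, pauliX_eq_permMatrix, ← permMatrix_mul,
    ← permMatrix_mul, (flipAt_commute i j).eq]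

lemma conjTranspose_zOn {W : Type} [Fintype W] (s : Finset W) : (zOn s)ᴴ = zOn s := by
  simp [zOn, diagonal_conjTranspose]

lemma zOn_mul_self (s : Finset V) : zOn s * zOn s = 1 := by
  simp [zOn, diagonal_mul_diagonal, ← mul_pow]

lemma commute_zOn (s t : Finset V) : Commute (zOn s) (zOn t) := by
  simp [Commute, SemiconjBy, zOn, diagonal_mul_diagonal, mul_comm]

lemma zOn_mul_pauliX (s : Finset V) (i : V) :
    zOn s * pauliX i = (if i ∈ s then -1 else 1 : ℂ) • (pauliX i * zOn s) := by
  ext f g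
  rw [Matrix.smul_apply, zOn, diagonal_mul, mul_diagonal, pauliX_eq_permMatrix]
  simp only [Equiv.Perm.permMatrix, PEquiv.toMatrix_apply, Equiv.toPEquiv_apply,
    Option.mem_def, Option.some_inj]
  by_cases h : flipAt i f = g
  · subst h
    simp only [if_true, mul_one, one_mul, neg_one_pow_card_filter_flipAt]
    split_ifs <;> simp
  · simp only [h, if_false, mul_zero, zero_mul, smul_zero]

lemma stab_mul_stab (G : SimpleGraph V) (i j : V) :
    stab G i * stab G j = (if G.Adj i j then -1 else 1 : ℂ) •
      (pauliX i * pauliX j * (zOn {k | G.Adj i k} * zOn {k | G.Adj j k})) := by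
  rw [stab, stab, mul_assoc, ← mul_assoc (zOn _), zOn_mul_pauliX, smul_mul_assoc,
    mul_smul_comm]
  simp only [mem_filter, mem_univ, true_and, mul_assoc]

lemma stab_mul_self (G : SimpleGraph V) (i : V) : stab G i * stab G i = 1 := by
  rw [stab_mul_stab, pauliX_mul_self, zOn_mul_self]
  simp

lemma commute_stab (G : SimpleGraph V) (i j : V) : Commute (stab G i) (stab G j) := by
  rw [Commute, SemiconjBy, stab_mul_stab, stab_mul_stab, (commute_pauliX i j).eq,
    (commute_zOn _ _).eq, G.adj_comm]

lemma isSelfAdjoint_stab (G : SimpleGraph V) (i : V) : IsSelfAdjoint (stab G i) := by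
  rw [IsSelfAdjoint, stab, star_eq_conjTranspose, conjTranspose_mul, conjTranspose_zOn,
    conjTranspose_pauliX, zOn_mul_pauliX]
  simp

lemma commute_stabFactor (G : SimpleGraph V) (v w : V) :
    Commute ((2 : ℂ)⁻¹ • (1 + stab G v)) ((2 : ℂ)⁻¹ • (1 + stab G w)) := by
  have h : Commute (1 + stab G v) (1 + stab G w) :=
    (Commute.one_left _).add_left ((Commute.one_right _).add_right (commute_stab G v w))
  exact (h.smul_left _).smul_right _

lemma prodOn_eq_noncommProd {f : V → QMat V} (hf : ∀ v w, Commute (f v) (f w))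
    (s : Finset V) :
    prodOn s f = s.noncommProd f (Pairwise.set_pairwise (fun v w _ => hf v w) _) := by
  rw [prodOn, ← noncommProd_toFinset _ _ (Pairwise.set_pairwise (fun v w _ => hf v w) _)
    s.nodup_toList]
  exact noncommProd_congr (toList_toFinset s) (fun _ _ => rfl) _

lemma stabProj_eq_noncommProd (G : SimpleGraph V) (s : Finset V) :
    stabProj G s = s.noncommProd (fun v => (2 : ℂ)⁻¹ • (1 + stab G v))
      (Pairwise.set_pairwise (fun v w _ => commute_stabFactor G v w) _) :=
  prodOn_eq_noncommProd (commute_stabFactor G) s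

lemma stabProj_empty (G : SimpleGraph V) : stabProj G ∅ = 1 := by
  rw [stabProj_eq_noncommProd, noncommProd_empty]

lemma isStarProjection_stabProj (G : SimpleGraph V) (s : Finset V) :
    IsStarProjection (stabProj G s) := by
  rw [stabProj_eq_noncommProd]
  exact .noncommProd _ _ _ fun v _ =>
    .inv_two_smul_one_add (isSelfAdjoint_stab G v) (stab_mul_self G v)

lemma commute_stabProj (G : SimpleGraph V) (s t : Finset V) :
    Commute (stabProj G s) (stabProj G t) := by
  rw [stabProj_eq_noncommProd, stabProj_eq_noncommProd]
  exact noncommProd_commute _ _ _ _ fun w _ =>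
    (noncommProd_commute _ _ _ _ fun v _ => commute_stabFactor G w v).symm

lemma stabProj_union (G : SimpleGraph V) {s t : Finset V} (h : Disjoint s t) :
    stabProj G (s ∪ t) = stabProj G s * stabProj G t := by
  simp only [stabProj_eq_noncommProd, noncommProd_union_of_disjoint h]

lemma stabProj_sup (G : SimpleGraph V) (𝒮 : Finset (Finset V))
    (h𝒮 : (𝒮 : Set (Finset V)).PairwiseDisjoint id) :
    stabProj G (𝒮.sup id) = 𝒮.noncommProd (stabProj G)
      (Pairwise.set_pairwise (fun s t _ => commute_stabProj G s t) _) := by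
  induction 𝒮 using Finset.induction_on with
  | empty => simpa using stabProj_empty G
  | insert s 𝒮 hs ih =>
    have h𝒮' := h𝒮.subset (coe_subset.2 (subset_insert s 𝒮))
    rw [sup_insert, noncommProd_insert_of_notMem _ _ _ _ hs, id, ← ih h𝒮',
      ← stabProj_union, sup_eq_union]
    exact Finset.disjoint_sup_right.2 fun t ht =>
      h𝒮 (mem_insert_self s 𝒮) (mem_insert_of_mem ht) (ne_of_mem_of_not_mem ht hs).symm

lemma witnessW_le_witnessW_iff (G : SimpleGraph V) (𝒱 𝒲 : Finset (Finset V)) :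
    witnessW G 𝒱 ≤ witnessW G 𝒲 ↔
      ∑ B ∈ 𝒲, stabProj G B + #𝒱 ≤ #𝒲 + ∑ C ∈ 𝒱, stabProj G C := by
  have h : witnessW G 𝒲 - witnessW G 𝒱 =
      (#𝒲 + ∑ C ∈ 𝒱, stabProj G C) - (∑ B ∈ 𝒲, stabProj G B + #𝒱) := by
    simp only [witnessW, sub_smul, Nat.cast_smul_eq_nsmul, nsmul_one]
    abel
  rw [← sub_nonneg, h, sub_nonneg]

/-- refinement monotonicity: if the partition `𝒲` of `V` refines
the partition `𝒱`, then `W(𝒲,G) − W(𝒱,G)` is positive semidefinite. -/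
theorem witness_refinement_posSemidef (G : SimpleGraph V) (𝒱 𝒲 : Finset (Finset V))
    (h𝒱 : IsPartitionOn Finset.univ 𝒱) (h𝒲 : IsPartitionOn Finset.univ 𝒲)
    (href : ∀ B ∈ 𝒲, ∃ C ∈ 𝒱, B ⊆ C) :
    (witnessW G 𝒲 - witnessW G 𝒱).PosSemidef := by
  obtain ⟨-, h𝒲disj, h𝒲cover⟩ := h𝒲
  choose! parent hparent hsub using href
  have hfiber (C : Finset V) (hC : C ∈ 𝒱) :
      ∑ B ∈ 𝒲 with parent B = C, stabProj G B + 1 ≤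
        #{B ∈ 𝒲 | parent B = C} + stabProj G C := by
    have hdisj := h𝒲disj.mono (coe_subset.2 (filter_subset (parent · = C) 𝒲))
    have hprod := stabProj_sup G _ hdisj
    rw [sup_filter_eq_of_refines h𝒱.2.1 (h𝒲cover ▸ subset_univ C) hparent hsub hC] at hprod
    rw [hprod]
    exact sum_add_one_le_card_add_noncommProd _ _ _ fun B _ => isStarProjection_stabProj G B
  rw [← Matrix.le_iff, witnessW_le_witnessW_iff]
  calc ∑ B ∈ 𝒲, stabProj G B + #𝒱
      = ∑ C ∈ 𝒱, (∑ B ∈ 𝒲 with parent B = C, stabProj G B + 1) := by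
        rw [sum_add_distrib, sum_fiberwise_of_maps_to hparent]; simp
    _ ≤ ∑ C ∈ 𝒱, (#{B ∈ 𝒲 | parent B = C} + stabProj G C) := sum_le_sum hfiber
    _ = #𝒲 + ∑ C ∈ 𝒱, stabProj G C := by
        rw [sum_add_distrib, ← Nat.cast_sum, ← card_eq_sum_card_fiberwise hparent]

end GraphStates
end
end

section
/- The fidelity of any biseparable n-qubit state ρ with a graph state |G⟩ of a connected graph G on n ≥ 2 vertices satisfies ⟨G|ρ|G⟩ ≤ 1/2; consequently W(G) = (1/2)I − |G⟩⟨G| has nonnegative expectation on all biseparable states. -/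
open scoped Classical
open Matrix

noncomputable section

namespace GraphStates

variable {V : Type} [Fintype V] [DecidableEq V]

/-!
Up to the factor `2^{-n/2}`, the amplitude of `|G⟩` at `f` is `(-1)^{e(f)}`, where `e(f)` counts
the edges with both ends set. For a product state `α ⊗ β` across a cut `(s, sᶜ)`, Cauchy–Schwarz
in the variables outside `s` bounds the fidelity by `⟨α|ρ_s|α⟩`, where `ρ_s` is the reduced state
of `|G⟩` on `s`. Flipping a qubit `v ∉ s` multiplies the amplitude by the parity of the set
neighbours of `v` (the stabilizer relation `X_v Z_{N(v)} |G⟩ = |G⟩`), so `ρ_s(x, x')` vanishes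
unless `x` and `x'` have the same cut syndrome, and otherwise has modulus at most `2^{-|s|}`.
As `G` is connected, some edge crosses the cut, so each syndrome class has at most `2^{|s|-1}`
elements, and a Schur test gives `⟨α|ρ_s|α⟩ ≤ 1/2`. The bound passes to mixtures.
-/

open Finset

section Bipartition

variable (s : Finset V)

omit [Fintype V] in
@[simp] lemma merge_apply_coe_mem (a : {v // v ∈ s} → Bool) (b : {v // v ∉ s} → Bool)
    (v : {v // v ∈ s}) : merge s a b v.1 = a v := by
  simp [merge, v.2]

omit [Fintype V] in
@[simp] lemma merge_apply_coe_notMem (a : {v // v ∈ s} → Bool) (b : {v // v ∉ s} → Bool)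
    (v : {v // v ∉ s}) : merge s a b v.1 = b v := by
  simp [merge, v.2]

omit [Fintype V] in
lemma merge_update (x : {v // v ∈ s} → Bool) (y : {v // v ∉ s} → Bool)
    (v : {v // v ∉ s}) (b : Bool) :
    merge s x (Function.update y v b) = Function.update (merge s x y) v.1 b := by
  funext w
  by_cases hw : w ∈ s
  · have hwv : w ≠ v.1 := fun h => v.2 (h ▸ hw)
    simp [merge, hw, hwv]
  · by_cases hwv : w = v.1
    · subst hwv; simp [merge, hw]
    · have : (⟨w, hw⟩ : {v // v ∉ s}) ≠ v := fun h => hwv (congrArg Subtype.val h)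
      simp [merge, hw, hwv, this]

lemma sum_eq_sum_merge {M : Type*} [AddCommMonoid M] (F : (V → Bool) → M) :
    ∑ f, F f = ∑ a, ∑ b, F (merge s a b) := by
  rw [← (Equiv.piEquivPiSubtypeProd (· ∈ s) fun _ => Bool).symm.sum_comp, Fintype.sum_prod_type]
  rfl

lemma trace_tensorSplit (A : Matrix ({v // v ∈ s} → Bool) ({v // v ∈ s} → Bool) ℂ)
    (B : Matrix ({v // v ∉ s} → Bool) ({v // v ∉ s} → Bool) ℂ) :
    trace (tensorSplit s A B) = trace A * trace B := by
  simp only [trace, Matrix.diag, tensorSplit, of_apply, sum_mul_sum]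
  rw [sum_eq_sum_merge s]
  simp only [merge_apply_coe_mem, merge_apply_coe_notMem]

def tensorVec (α : ({v // v ∈ s} → Bool) → ℂ) (β : ({v // v ∉ s} → Bool) → ℂ) :
    (V → Bool) → ℂ :=
  fun f => α (fun v => f v.1) * β (fun v => f v.1)

omit [Fintype V] [DecidableEq V] in
lemma tensorSplit_outer (α : ({v // v ∈ s} → Bool) → ℂ) (β : ({v // v ∉ s} → Bool) → ℂ) :
    tensorSplit s (outer α) (outer β) = outer (tensorVec s α β) := by
  ext f g
  simp only [tensorSplit, outer, tensorVec, of_apply, map_mul]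
  ring

lemma card_subtype_mem_add_card_subtype_notMem :
    Fintype.card {v // v ∈ s} + Fintype.card {v // v ∉ s} = Fintype.card V := by
  rw [← Fintype.card_sum]
  exact Fintype.card_congr (Equiv.sumCompl _)

end Bipartition

lemma trace_outer {ι : Type} [Fintype ι] (ψ : ι → ℂ) :
    trace (outer ψ) = ∑ f, (Complex.normSq (ψ f) : ℂ) := by
  simp [trace, outer, Complex.mul_conj]

lemma IsPure.trace_eq_one {ι : Type} [Fintype ι] {ρ : Matrix ι ι ℂ} (hρ : IsPure ρ) :
    trace ρ = 1 := by
  obtain ⟨ψ, hψ, rfl⟩ := hρ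
  rw [trace_outer, ← Complex.ofReal_sum, hψ, Complex.ofReal_one]

lemma trace_outer_mul_outer {ι : Type} [Fintype ι] (ψ φ : ι → ℂ) :
    trace (outer ψ * outer φ) = (Complex.normSq (star ψ ⬝ᵥ φ) : ℂ) := by
  rw [← Complex.mul_conj]
  simp only [trace, Matrix.diag, mul_apply, outer, of_apply, dotProduct, Pi.star_apply,
    RCLike.star_def, map_sum, map_mul, Complex.conj_conj, sum_mul_sum]
  rw [sum_comm]
  exact sum_congr rfl fun _ _ => sum_congr rfl fun _ _ => by ring

lemma normSq_sum_mul_le {ι : Type} [Fintype ι] (b u : ι → ℂ) :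
    Complex.normSq (∑ i, b i * u i) ≤
      (∑ i, Complex.normSq (b i)) * ∑ i, Complex.normSq (u i) := by
  simp only [← Complex.sq_norm]
  calc ‖∑ i, b i * u i‖ ^ 2 ≤ (∑ i, ‖b i‖ * ‖u i‖) ^ 2 := by
        gcongr
        exact (norm_sum_le _ _).trans_eq (by simp only [norm_mul])
    _ ≤ (∑ i, ‖b i‖ ^ 2) * ∑ i, ‖u i‖ ^ 2 := sum_mul_sq_le_sq_mul_sq _ _ _

lemma trace_eq_one_and_re_trace_mul_le_of_mixture {n ι : Type*} [Fintype n] [Fintype ι]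
    (M : Matrix n n ℂ) {c : ℝ} {q : ι → ℝ} {σ : ι → Matrix n n ℂ} (hq : ∀ k, 0 ≤ q k)
    (hq1 : ∑ k, q k = 1) (hσ : ∀ k, trace (σ k) = 1 ∧ (trace (M * σ k)).re ≤ c) :
    trace (∑ k, (q k : ℂ) • σ k) = 1 ∧ (trace (M * ∑ k, (q k : ℂ) • σ k)).re ≤ c := by
  constructor
  · simp [trace_sum, trace_smul, (hσ _).1, ← Complex.ofReal_sum, hq1]
  · simp only [mul_sum, Matrix.mul_smul, trace_sum, trace_smul, smul_eq_mul, Complex.re_sum,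
      Complex.re_ofReal_mul]
    calc ∑ k, q k * (trace (M * σ k)).re ≤ ∑ k, q k * c :=
          sum_le_sum fun k _ => mul_le_mul_of_nonneg_left (hσ k).2 (hq k)
      _ = c := by rw [← sum_mul, hq1, one_mul]

section Fibers

variable {ι κ : Type*} [Fintype ι] [DecidableEq κ]

lemma two_mul_card_fiber_le (σ : ι → κ) {e : ι → ι} (he : e.Injective)
    (hσ : ∀ x, σ (e x) ≠ σ x) (c : κ) : 2 * #{x | σ x = c} ≤ Fintype.card ι := by
  have hdisj : Disjoint ({x | σ x = c} : Finset ι) (({x | σ x = c} : Finset ι).image e) := by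
    simp only [disjoint_left, mem_filter, mem_univ, true_and, mem_image, not_exists, not_and]
    rintro _ hy x hx rfl
    exact hσ x (hy.trans hx.symm)
  calc 2 * #{x | σ x = c} = #(({x | σ x = c} : Finset ι) ∪ ({x | σ x = c} : Finset ι).image e) := by
        rw [card_union_of_disjoint hdisj, card_image_of_injective _ he, two_mul]
    _ ≤ Fintype.card ι := card_le_univ _

/-- Schur test for the block matrix `[σ x = σ x']` with blocks of size at most `m`. -/
lemma sum_sum_ite_mul_le (σ : ι → κ) {m : ℝ} (hm : ∀ c, (#{x | σ x = c} : ℝ) ≤ m)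
    (a : ι → ℝ) :
    ∑ x, ∑ x', (if σ x = σ x' then a x * a x' else 0) ≤ m * ∑ x, a x ^ 2 := by
  set g : ι → ι → ℝ := fun x x' => if σ x = σ x' then a x ^ 2 else 0
  have hg : ∑ x, ∑ x', g x x' ≤ m * ∑ x, a x ^ 2 := by
    rw [mul_sum]
    refine sum_le_sum fun x _ => ?_
    simp only [g, ← sum_filter, sum_const, nsmul_eq_mul]
    gcongr
    simpa only [eq_comm] using hm (σ x)
  calc ∑ x, ∑ x', (if σ x = σ x' then a x * a x' else 0)
      ≤ ∑ x, ∑ x', (g x x' + g x' x) / 2 := by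
        refine sum_le_sum fun x _ => sum_le_sum fun x' _ => ?_
        simp only [g, eq_comm (a := σ x')]
        split_ifs
        · nlinarith [sq_nonneg (a x - a x')]
        · simp
    _ = ∑ x, ∑ x', g x x' := by
        simp only [← sum_div, sum_add_distrib]
        rw [sum_comm (f := fun x x' => g x' x)]
        ring
    _ ≤ m * ∑ x, a x ^ 2 := hg

end Fibers

lemma sum_normSq_eq_dotProduct_ptrace (s : Finset V) (ψ : (V → Bool) → ℂ)
    (α : ({v // v ∈ s} → Bool) → ℂ) :
    ∑ y : {v // v ∉ s} → Bool,
        (Complex.normSq (∑ x, star (ψ (merge s x y)) * α x) : ℂ) =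
      star α ⬝ᵥ ptrace s (outer ψ) *ᵥ α := by
  simp only [← Complex.mul_conj, map_sum, map_mul, Complex.conj_conj, dotProduct,
    mulVec, ptrace, outer, of_apply, Pi.star_apply, RCLike.star_def, mul_sum, sum_mul]
  rw [sum_comm]
  refine sum_congr rfl fun x' _ => ?_
  rw [sum_comm]
  exact sum_congr rfl fun x _ => sum_congr rfl fun y _ => by ring

lemma normSq_dotProduct_tensorVec_le (s : Finset V) (ψ : (V → Bool) → ℂ)
    (α : ({v // v ∈ s} → Bool) → ℂ) (β : ({v // v ∉ s} → Bool) → ℂ) :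
    Complex.normSq (star ψ ⬝ᵥ tensorVec s α β) ≤
      (∑ y, Complex.normSq (β y)) * (star α ⬝ᵥ ptrace s (outer ψ) *ᵥ α).re := by
  have hsplit : star ψ ⬝ᵥ tensorVec s α β =
      ∑ y, β y * ∑ x, star (ψ (merge s x y)) * α x := by
    simp only [dotProduct, Pi.star_apply, tensorVec, mul_sum]
    rw [sum_eq_sum_merge s, sum_comm]
    simp only [merge_apply_coe_mem, merge_apply_coe_notMem]
    exact sum_congr rfl fun y _ => sum_congr rfl fun x _ => by ring
  rw [hsplit, ← sum_normSq_eq_dotProduct_ptrace, ← Complex.ofReal_sum, Complex.ofReal_re]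
  exact normSq_sum_mul_le _ _

def trueEdgeCount (G : SimpleGraph V) (f : V → Bool) : ℕ :=
  #{e : Sym2 V | e ∈ G.edgeSet ∧ ∀ v ∈ e, f v = true}

def trueNeighborCount (G : SimpleGraph V) (f : V → Bool) (v : V) : ℕ :=
  #{w | G.Adj v w ∧ f w = true}

lemma graphStateVec_apply (G : SimpleGraph V) (f : V → Bool) :
    graphStateVec G f = (-1) ^ trueEdgeCount G f * (Real.sqrt 2 : ℂ)⁻¹ ^ Fintype.card V := by
  simp [graphStateVec, czProd, mulVec_diagonal, plusVec, trueEdgeCount]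

lemma trueEdgeCount_update_true (G : SimpleGraph V) {f : V → Bool} {v : V} (hv : f v = false) :
    trueEdgeCount G (Function.update f v true) = trueEdgeCount G f + trueNeighborCount G f v := by
  have hsplit : univ.filter (fun e : Sym2 V =>
        e ∈ G.edgeSet ∧ ∀ u ∈ e, Function.update f v true u = true) =
      univ.filter (fun e : Sym2 V => e ∈ G.edgeSet ∧ ∀ u ∈ e, f u = true) ∪
        (univ.filter fun w => G.Adj v w ∧ f w = true).image fun w => s(v, w) := by
    ext e
    induction e using Sym2.ind with
    | _ a b =>
      simp only [mem_filter, mem_univ, true_and, mem_union, mem_image, SimpleGraph.mem_edgeSet,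
        Sym2.mem_iff, forall_eq_or_imp, forall_eq, Function.update_apply, Sym2.eq_iff]
      grind [SimpleGraph.adj_comm, SimpleGraph.irrefl]
  have hdisj : Disjoint (univ.filter fun e : Sym2 V => e ∈ G.edgeSet ∧ ∀ u ∈ e, f u = true)
      ((univ.filter fun w => G.Adj v w ∧ f w = true).image fun w => s(v, w)) := by
    simp only [disjoint_left, mem_filter, mem_univ, true_and, mem_image, not_exists, not_and]
    rintro _ he w _ rfl
    simp [hv] at he
  rw [trueEdgeCount, hsplit, card_union_of_disjoint hdisj,
    card_image_of_injective _ fun _ _ h => Sym2.congr_right.mp h]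
  rfl

lemma trueNeighborCount_update_self (G : SimpleGraph V) (f : V → Bool) (v : V) (b : Bool) :
    trueNeighborCount G (Function.update f v b) v = trueNeighborCount G f v := by
  unfold trueNeighborCount
  congr 1
  ext w
  simp only [mem_filter, mem_univ, true_and, and_congr_right_iff]
  intro hvw
  rw [Function.update_of_ne hvw.ne']

lemma graphStateVec_update_not (G : SimpleGraph V) (f : V → Bool) (v : V) :
    graphStateVec G (Function.update f v (!f v)) =
      (-1) ^ trueNeighborCount G f v * graphStateVec G f := by
  cases hf : f v with
  | false =>
    rw [Bool.not_false, graphStateVec_apply, graphStateVec_apply,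
      trueEdgeCount_update_true G hf, pow_add]
    ring
  | true =>
    have hg : Function.update f v false v = false := Function.update_self ..
    have hf' : Function.update (Function.update f v false) v true = f := by
      rw [Function.update_idem, ← hf, Function.update_eq_self]
    have hcount := trueEdgeCount_update_true G hg
    rw [hf', trueNeighborCount_update_self] at hcount
    have hsq : ((-1 : ℂ) ^ trueNeighborCount G f v) ^ 2 = 1 := by
      rw [← pow_mul, Even.neg_one_pow (even_two.mul_left _)]
    rw [Bool.not_true, graphStateVec_apply, graphStateVec_apply, hcount, pow_add]
    linear_combination (-(-1) ^ trueEdgeCount G (Function.update f v false) *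
      (Real.sqrt 2 : ℂ)⁻¹ ^ Fintype.card V) * hsq

lemma trueNeighborCount_merge (G : SimpleGraph V) (s : Finset V) (x : {v // v ∈ s} → Bool)
    (y : {v // v ∉ s} → Bool) (v : V) :
    trueNeighborCount G (merge s x y) v =
      #{u : {u // u ∈ s} | G.Adj v u ∧ x u = true} +
        #{u : {u // u ∉ s} | G.Adj v u ∧ y u = true} := by
  simp only [trueNeighborCount, card_filter]
  rw [← Fintype.sum_subtype_add_sum_subtype (· ∈ s)]
  simp only [merge_apply_coe_mem, merge_apply_coe_notMem]
  -- the two sides sum over `↥s` with different (equal) `Fintype` instances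
  convert rfl

lemma norm_graphStateVec_mul_norm (G : SimpleGraph V) (f g : V → Bool) :
    ‖graphStateVec G f‖ * ‖graphStateVec G g‖ = (2 ^ Fintype.card V)⁻¹ := by
  simp only [graphStateVec_apply, norm_mul, norm_pow, norm_neg, norm_one, one_pow, one_mul,
    norm_inv, Complex.norm_real, Real.norm_eq_abs, abs_of_nonneg (Real.sqrt_nonneg 2), ← mul_pow,
    ← mul_inv, Real.mul_self_sqrt zero_le_two, inv_pow]

/-- The syndrome `Γᵀ x` over `𝔽₂`, for the biadjacency matrix `Γ` of the cut `(s, sᶜ)`. -/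
def cutParity (G : SimpleGraph V) (s : Finset V) (x : {v // v ∈ s} → Bool) :
    {v // v ∉ s} → ZMod 2 :=
  fun v => #{u : {u // u ∈ s} | G.Adj v u ∧ x u = true}

lemma ptrace_outer_graphStateVec_eq_zero (G : SimpleGraph V) (s : Finset V)
    {x x' : {v // v ∈ s} → Bool} (h : cutParity G s x ≠ cutParity G s x') :
    ptrace s (outer (graphStateVec G)) x x' = 0 := by
  obtain ⟨v, hv⟩ := Function.ne_iff.mp h
  have hodd : Odd (#{u : {u // u ∈ s} | G.Adj v u ∧ x u = true} +
      #{u : {u // u ∈ s} | G.Adj v u ∧ x' u = true}) := by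
    rw [cutParity, cutParity, Ne, ZMod.natCast_eq_natCast_iff'] at hv
    rw [Nat.odd_iff]
    omega
  rw [ptrace, of_apply]
  -- flipping `y v` reverses the sign of every summand
  refine sum_involution (fun y _ => Function.update y v (!y v)) (fun y _ => ?_)
    (fun y _ _ => ?_) (fun _ _ => mem_univ _) (fun y _ => ?_)
  · have hflip (z : {v // v ∈ s} → Bool) := by
      simpa using graphStateVec_update_not G (merge s z y) v
    simp only [outer, of_apply, merge_update, hflip, trueNeighborCount_merge,
      map_mul, map_pow, map_neg, map_one]
    have hsign : (-1 : ℂ) ^ (#{u : {u // u ∈ s} | G.Adj v u ∧ x u = true} +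
          #{u : {u // u ∉ s} | G.Adj v u ∧ y u = true}) *
        (-1) ^ (#{u : {u // u ∈ s} | G.Adj v u ∧ x' u = true} +
          #{u : {u // u ∉ s} | G.Adj v u ∧ y u = true}) = -1 := by
      rw [← pow_add, add_add_add_comm, ← two_mul]
      exact (hodd.add_even (even_two_mul _)).neg_one_pow
    linear_combination graphStateVec G (merge s x y) *
      starRingEnd ℂ (graphStateVec G (merge s x' y)) * hsign
  · exact fun hy => by simpa using congrFun hy v
  · simp

lemma norm_ptrace_outer_graphStateVec_le (G : SimpleGraph V) (s : Finset V)
    (x x' : {v // v ∈ s} → Bool) :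
    ‖ptrace s (outer (graphStateVec G)) x x'‖ ≤ (2 ^ Fintype.card {v // v ∈ s})⁻¹ := by
  calc ‖ptrace s (outer (graphStateVec G)) x x'‖
      ≤ ∑ y : {v // v ∉ s} → Bool, ‖graphStateVec G (merge s x y)‖ *
          ‖graphStateVec G (merge s x' y)‖ := by
        simp only [ptrace, outer, of_apply]
        exact (norm_sum_le _ _).trans_eq (by simp only [norm_mul, Complex.norm_conj])
    _ = (2 ^ Fintype.card {v // v ∈ s})⁻¹ := by
        simp only [norm_graphStateVec_mul_norm, sum_const, card_univ, Fintype.card_fun,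
          Fintype.card_bool, nsmul_eq_mul]
        rw [← card_subtype_mem_add_card_subtype_notMem s, pow_add]
        push_cast
        field_simp

omit [Fintype V] in
lemma cutParity_update_not (G : SimpleGraph V) (s : Finset V) (x : {v // v ∈ s} → Bool)
    {u : {v // v ∈ s}} {v : {v // v ∉ s}} (hadj : G.Adj v u) :
    cutParity G s (Function.update x u (!x u)) v = cutParity G s x v + 1 := by
  simp only [cutParity, natCast_card_filter]
  rw [Fintype.sum_eq_add_sum_compl u, Fintype.sum_eq_add_sum_compl u]
  have hrest : ∑ w ∈ {u}ᶜ, (if G.Adj v w ∧ Function.update x u (!x u) w = true then 1 else 0) =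
      ∑ w ∈ {u}ᶜ, (if G.Adj v w ∧ x w = true then (1 : ZMod 2) else 0) :=
    sum_congr rfl fun w hw => by rw [Function.update_of_ne (by simpa using hw)]
  have hflip (b : Bool) : (if G.Adj v u ∧ (!b) = true then 1 else 0 : ZMod 2) =
      (if G.Adj v u ∧ b = true then 1 else 0) + 1 := by
    cases b
    · simp [hadj]
    · simp [hadj]; decide
  rw [hrest, Function.update_self, hflip]
  ring

omit [DecidableEq V] in
lemma exists_adj_across_cut (G : SimpleGraph V) (hconn : G.Connected) {s : Finset V}
    (hs : s.Nonempty) (hs' : s ≠ univ) : ∃ (u : {v // v ∈ s}) (v : {v // v ∉ s}), G.Adj v u := by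
  obtain ⟨a, ha⟩ := hs
  obtain ⟨b, -, hb⟩ := exists_of_ssubset (ssubset_univ_iff.mpr hs')
  obtain ⟨d, -, hd, hd'⟩ := (hconn.preconnected a b).some.exists_boundary_dart (s : Set V) ha hb
  exact ⟨⟨_, hd⟩, ⟨_, hd'⟩, d.adj.symm⟩

lemma card_cutParity_fiber_le (G : SimpleGraph V) (hconn : G.Connected) {s : Finset V}
    (hs : s.Nonempty) (hs' : s ≠ univ) (c : {v // v ∉ s} → ZMod 2) :
    (#{x | cutParity G s x = c} : ℝ) ≤ 2 ^ Fintype.card {v // v ∈ s} / 2 := by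
  obtain ⟨u, v, hadj⟩ := exists_adj_across_cut G hconn hs hs'
  have hinj : (fun x : {v // v ∈ s} → Bool => Function.update x u (!x u)).Injective :=
    Function.LeftInverse.injective (g := fun x => Function.update x u (!x u)) fun x => by simp
  have h := two_mul_card_fiber_le (cutParity G s) hinj (fun x h => by
    simpa [cutParity_update_not G s x hadj] using congrFun h v) c
  rw [Fintype.card_fun, Fintype.card_bool] at h
  rw [le_div_iff₀ two_pos]
  exact_mod_cast (mul_comm _ _).trans_le h

lemma re_dotProduct_ptrace_graphStateVec_le (G : SimpleGraph V) (hconn : G.Connected)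
    {s : Finset V} (hs : s.Nonempty) (hs' : s ≠ univ) (α : ({v // v ∈ s} → Bool) → ℂ)
    (hα : ∑ x, Complex.normSq (α x) = 1) :
    (star α ⬝ᵥ ptrace s (outer (graphStateVec G)) *ᵥ α).re ≤ 1 / 2 := by
  set N : ℝ := 2 ^ Fintype.card {v // v ∈ s}
  have hN : 0 < N := by positivity
  calc (star α ⬝ᵥ ptrace s (outer (graphStateVec G)) *ᵥ α).re
      ≤ ‖star α ⬝ᵥ ptrace s (outer (graphStateVec G)) *ᵥ α‖ := Complex.re_le_norm _
    _ ≤ ∑ x, ∑ x', (if cutParity G s x = cutParity G s x' then ‖α x‖ * ‖α x'‖ else 0) * N⁻¹ := by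
        simp only [dotProduct, mulVec, mul_sum]
        refine (norm_sum_le _ _).trans (sum_le_sum fun x _ =>
          (norm_sum_le _ _).trans (sum_le_sum fun x' _ => ?_))
        split_ifs with h
        · rw [norm_mul, norm_mul, Pi.star_apply, norm_star, mul_left_comm, mul_comm]
          gcongr
          exact norm_ptrace_outer_graphStateVec_le G s x x'
        · simp [ptrace_outer_graphStateVec_eq_zero G s h]
    _ ≤ (N / 2 * ∑ x, ‖α x‖ ^ 2) * N⁻¹ := by
        simp only [← sum_mul]
        gcongr
        exact sum_sum_ite_mul_le _ (card_cutParity_fiber_le G hconn hs hs') _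
    _ = 1 / 2 := by
        simp only [Complex.sq_norm, hα]
        field_simp

lemma normSq_dotProduct_graphStateVec_tensorVec_le (G : SimpleGraph V) (hconn : G.Connected)
    {s : Finset V} (hs : s.Nonempty) (hs' : s ≠ univ)
    {α : ({v // v ∈ s} → Bool) → ℂ} {β : ({v // v ∉ s} → Bool) → ℂ}
    (hα : ∑ x, Complex.normSq (α x) = 1) (hβ : ∑ y, Complex.normSq (β y) = 1) :
    Complex.normSq (star (graphStateVec G) ⬝ᵥ tensorVec s α β) ≤ 1 / 2 :=
  (normSq_dotProduct_tensorVec_le s _ α β).trans <| by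
    rw [hβ, one_mul]
    exact re_dotProduct_ptrace_graphStateVec_le G hconn hs hs' α hα

lemma SeparableWrt.trace_eq_one_and_fidelity_le (G : SimpleGraph V) (hconn : G.Connected)
    {s : Finset V} (hs : s.Nonempty) (hs' : s ≠ univ) {σ : QMat V} (hσ : SeparableWrt s σ) :
    trace σ = 1 ∧ (trace (outer (graphStateVec G) * σ)).re ≤ 1 / 2 := by
  obtain ⟨ι, _, p, a, b, hp, hp1, hpure, rfl⟩ := hσ
  refine trace_eq_one_and_re_trace_mul_le_of_mixture _ hp hp1 fun k => ?_
  refine ⟨by rw [trace_tensorSplit, (hpure k).1.trace_eq_one, (hpure k).2.trace_eq_one, one_mul],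
    ?_⟩
  obtain ⟨⟨α, hα, ha⟩, ⟨β, hβ, hb⟩⟩ := hpure k
  rw [ha, hb, tensorSplit_outer, trace_outer_mul_outer, Complex.ofReal_re]
  exact normSq_dotProduct_graphStateVec_tensorVec_le G hconn hs hs' hα hβ

theorem biseparable_fidelity_le_half_general (G : SimpleGraph V) (hconn : G.Connected)
    (ρ : QMat V) (hbisep : Biseparable ρ) :
    (Matrix.trace (outer (graphStateVec G) * ρ)).re ≤ 1 / 2 ∧
    0 ≤ (Matrix.trace (((1 / 2 : ℂ) • 1 - outer (graphStateVec G)) * ρ)).re := by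
  obtain ⟨ι, _, q, A, σ, hq, hq1, hσ, rfl⟩ := hbisep
  obtain ⟨htrace, hfid⟩ := trace_eq_one_and_re_trace_mul_le_of_mixture _ hq hq1 fun k =>
    (hσ k).2.2.trace_eq_one_and_fidelity_le G hconn (hσ k).1 (hσ k).2.1
  refine ⟨hfid, ?_⟩
  rw [Matrix.sub_mul, trace_sub, Matrix.smul_mul, Matrix.one_mul, trace_smul, htrace,
    smul_eq_mul, mul_one, Complex.sub_re, show (1 / 2 : ℂ).re = 1 / 2 by norm_num]
  exact sub_nonneg.mpr hfid

/-- for a connected graph `G` on `n ≥ 2` vertices, any biseparable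
state `ρ` has fidelity at most `1/2` with the graph state `|G⟩`; consequently the
witness `W(G) = (1/2)I − |G⟩⟨G|` has nonnegative expectation on `ρ`. -/
theorem biseparable_fidelity_le_half (G : SimpleGraph V) (hconn : G.Connected)
    (hcard : 2 ≤ Fintype.card V) (ρ : QMat V) (hbisep : Biseparable ρ) :
    (Matrix.trace (outer (graphStateVec G) * ρ)).re ≤ 1 / 2 ∧
    0 ≤ (Matrix.trace (((1 / 2 : ℂ) • 1 - outer (graphStateVec G)) * ρ)).re :=
  biseparable_fidelity_le_half_general G hconn ρ hbisep

end GraphStates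
end
end
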